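/- arXiv:2106.02682 — 4 statements merged into one kernel-verified Lean document; each statement's English description precedes it below -/
import Mathlib

section
/- Let n be a finite type, C : Matrix n n ℂ Hermitian with spectral decomposition C = U * D * Uᴴ where U is unitary and D is the real diagonal matrix of eigenvalues. Define C₊ = U * D₊ * Uᴴ, where D₊ is the diagonal matrix whose entries are max(λ, 0) for the eigenvalues λ of C. Then C₊ is positive semidefinite, for every positive semidefinite S : Matrix n n ℂ one has ‖C₊ − C‖_F ≤ ‖S − C‖_F (Frobenius norm), and equality holds only for S = C₊. In other words, C₊ is the unique nearest positive semidefinite matrix to C in Frobenius norm. -/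
open Matrix
open scoped ComplexOrder

/-!
Conjugation by the unitary `U` preserves the Frobenius norm and the cone of positive
semidefinite matrices, so one may assume `C = diagonal d`. The diagonal entries of a positive
semidefinite `T` are nonnegative reals, and `max (d i) 0` is the unique nearest point of `[0, ∞)`
to `d i`. Hence `diagonal (max d 0) - diagonal d` is entrywise no larger in norm than
`T - diagonal d`, strictly so at any entry where `T` differs from `diagonal (max d 0)`.
-/

/-- Frobenius norm of a complex matrix. -/
noncomputable def frobNorm {n : Type*} [Fintype n] (M : Matrix n n ℂ) : ℝ :=
  Real.sqrt (∑ x, ∑ y, ‖M x y‖ ^ 2)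

section Frobenius

variable {n : Type*} [Fintype n]

theorem frobNorm_eq_sqrt_re_trace (A : Matrix n n ℂ) :
    frobNorm A = √(Aᴴ * A).trace.re := by
  rw [frobNorm, Finset.sum_comm]
  simp only [trace, diag_apply, mul_apply, conjTranspose_apply, Complex.re_sum, Complex.star_def,
    ← Complex.normSq_eq_conj_mul_self, Complex.normSq_eq_norm_sq, Complex.ofReal_re]

theorem frobNorm_unitary_mul_mul_conjTranspose [DecidableEq n] {U : Matrix n n ℂ}
    (hU : U ∈ unitaryGroup n ℂ) (A : Matrix n n ℂ) : frobNorm (U * A * Uᴴ) = frobNorm A := by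
  have hUU : Uᴴ * U = 1 := mem_unitaryGroup_iff'.mp hU
  rw [frobNorm_eq_sqrt_re_trace, frobNorm_eq_sqrt_re_trace]
  have hconj : (U * A * Uᴴ)ᴴ * (U * A * Uᴴ) = U * (Aᴴ * A) * Uᴴ := by
    simp only [conjTranspose_mul, conjTranspose_conjTranspose, Matrix.mul_assoc]
    rw [← Matrix.mul_assoc Uᴴ U, hUU, Matrix.one_mul]
  rw [hconj, trace_mul_cycle, ← Matrix.mul_assoc, hUU, Matrix.one_mul]

theorem frobNorm_le_of_forall_norm_le {A B : Matrix n n ℂ} (h : ∀ x y, ‖A x y‖ ≤ ‖B x y‖) :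
    frobNorm A ≤ frobNorm B :=
  Real.sqrt_le_sqrt <| Finset.sum_le_sum fun x _ => Finset.sum_le_sum fun y _ =>
    pow_le_pow_left₀ (norm_nonneg _) (h x y) 2

theorem frobNorm_lt_of_forall_norm_le {A B : Matrix n n ℂ} (h : ∀ x y, ‖A x y‖ ≤ ‖B x y‖)
    {x y : n} (hlt : ‖A x y‖ < ‖B x y‖) : frobNorm A < frobNorm B := by
  have hsq (x y : n) : ‖A x y‖ ^ 2 ≤ ‖B x y‖ ^ 2 := pow_le_pow_left₀ (norm_nonneg _) (h x y) 2
  refine Real.sqrt_lt_sqrt (by positivity) <|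
    Finset.sum_lt_sum (fun x _ => Finset.sum_le_sum fun y _ => hsq x y) ⟨x, Finset.mem_univ _, ?_⟩
  exact Finset.sum_lt_sum (fun y _ => hsq x y) ⟨y, Finset.mem_univ _,
    pow_lt_pow_left₀ hlt (norm_nonneg _) two_ne_zero⟩

end Frobenius

theorem abs_max_zero_sub_lt {t e : ℝ} (ht : 0 ≤ t) (hne : t ≠ max e 0) :
    |max e 0 - e| < |t - e| := by
  rcases le_or_gt e 0 with he | he
  · rw [max_eq_right he] at hne ⊢
    rw [abs_of_nonneg (by linarith), abs_of_nonneg (by linarith)]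
    exact sub_lt_sub_right (lt_of_le_of_ne ht hne.symm) e
  · rw [max_eq_left he.le] at hne ⊢
    simpa [sub_eq_zero] using hne

theorem Complex.norm_max_zero_sub_lt {z : ℂ} (hz : 0 ≤ z) (e : ℝ)
    (hne : z ≠ ((max e 0 : ℝ) : ℂ)) : ‖((max e 0 : ℝ) : ℂ) - e‖ < ‖z - e‖ := by
  obtain ⟨t, ht, rfl⟩ := RCLike.nonneg_iff_exists_ofReal.mp hz
  change ‖((max e 0 : ℝ) : ℂ) - e‖ < ‖(t : ℂ) - e‖
  simp only [← Complex.ofReal_sub, Complex.norm_real, Real.norm_eq_abs]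
  exact abs_max_zero_sub_lt ht fun h => hne (congrArg _ h)

section PosPart

variable {n : Type*} [DecidableEq n]

theorem Matrix.PosSemidef.norm_diagonal_max_zero_sub_apply_lt {T : Matrix n n ℂ}
    (hT : T.PosSemidef) (d : n → ℝ) {x y : n}
    (hne : T x y ≠ diagonal (fun i => ((max (d i) 0 : ℝ) : ℂ)) x y) :
    ‖(diagonal (fun i => ((max (d i) 0 : ℝ) : ℂ)) - diagonal (fun i => (d i : ℂ))) x y‖
      < ‖(T - diagonal (fun i => (d i : ℂ))) x y‖ := by
  rcases eq_or_ne x y with rfl | hxy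
  · simp only [sub_apply, diagonal_apply_eq] at hne ⊢
    exact Complex.norm_max_zero_sub_lt hT.diag_nonneg (d x) hne
  · simp only [sub_apply, diagonal_apply_ne _ hxy, sub_zero, norm_zero, norm_pos_iff] at hne ⊢
    exact hne

theorem Matrix.PosSemidef.norm_diagonal_max_zero_sub_apply_le {T : Matrix n n ℂ}
    (hT : T.PosSemidef) (d : n → ℝ) (x y : n) :
    ‖(diagonal (fun i => ((max (d i) 0 : ℝ) : ℂ)) - diagonal (fun i => (d i : ℂ))) x y‖
      ≤ ‖(T - diagonal (fun i => (d i : ℂ))) x y‖ := by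
  by_cases h : T x y = diagonal (fun i => ((max (d i) 0 : ℝ) : ℂ)) x y
  · simp only [sub_apply, h, le_refl]
  · exact (hT.norm_diagonal_max_zero_sub_apply_lt d h).le

theorem Matrix.PosSemidef.frobNorm_diagonal_max_zero_sub_le [Fintype n] {T : Matrix n n ℂ}
    (hT : T.PosSemidef) (d : n → ℝ) :
    frobNorm (diagonal (fun i => ((max (d i) 0 : ℝ) : ℂ)) - diagonal (fun i => (d i : ℂ)))
      ≤ frobNorm (T - diagonal (fun i => (d i : ℂ))) :=
  frobNorm_le_of_forall_norm_le (hT.norm_diagonal_max_zero_sub_apply_le d)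

theorem Matrix.PosSemidef.frobNorm_diagonal_max_zero_sub_lt [Fintype n] {T : Matrix n n ℂ}
    (hT : T.PosSemidef) (d : n → ℝ) (hne : T ≠ diagonal (fun i => ((max (d i) 0 : ℝ) : ℂ))) :
    frobNorm (diagonal (fun i => ((max (d i) 0 : ℝ) : ℂ)) - diagonal (fun i => (d i : ℂ)))
      < frobNorm (T - diagonal (fun i => (d i : ℂ))) := by
  obtain ⟨x, y, hxy⟩ : ∃ x y, T x y ≠ diagonal (fun i => ((max (d i) 0 : ℝ) : ℂ)) x y := by
    by_contra! h
    exact hne (Matrix.ext h)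
  exact frobNorm_lt_of_forall_norm_le (hT.norm_diagonal_max_zero_sub_apply_le d)
    (hT.norm_diagonal_max_zero_sub_apply_lt d hxy)

end PosPart

theorem stmt_6_general {n : Type*} [Fintype n] [DecidableEq n]
    (C : Matrix n n ℂ)
    (U : Matrix n n ℂ) (hU : U ∈ Matrix.unitaryGroup n ℂ) (d : n → ℝ)
    (hdecomp : C = U * Matrix.diagonal (fun i => (d i : ℂ)) * Uᴴ) :
    (U * Matrix.diagonal (fun i => ((max (d i) 0 : ℝ) : ℂ)) * Uᴴ).PosSemidef ∧
    ∀ S : Matrix n n ℂ, S.PosSemidef →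
      frobNorm (U * Matrix.diagonal (fun i => ((max (d i) 0 : ℝ) : ℂ)) * Uᴴ - C)
        ≤ frobNorm (S - C) ∧
      (frobNorm (U * Matrix.diagonal (fun i => ((max (d i) 0 : ℝ) : ℂ)) * Uᴴ - C)
          = frobNorm (S - C) →
        S = U * Matrix.diagonal (fun i => ((max (d i) 0 : ℝ) : ℂ)) * Uᴴ) := by
  set P : Matrix n n ℂ := diagonal (fun i => ((max (d i) 0 : ℝ) : ℂ))
  set D : Matrix n n ℂ := diagonal (fun i => (d i : ℂ))
  have hP : P.PosSemidef :=
    PosSemidef.diagonal fun i => Complex.zero_le_real.mpr (le_max_right _ _)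
  refine ⟨hP.mul_mul_conjTranspose_same U, fun S hS => ?_⟩
  set T := Uᴴ * S * U
  have hT : T.PosSemidef := hS.conjTranspose_mul_mul_same U
  have hUU : U * Uᴴ = 1 := mem_unitaryGroup_iff.mp hU
  have hS_eq : S = U * T * Uᴴ := by
    simp only [T, Matrix.mul_assoc, hUU, Matrix.mul_one, ← Matrix.mul_assoc U Uᴴ, Matrix.one_mul]
  have hdistP : frobNorm (U * P * Uᴴ - C) = frobNorm (P - D) := by
    rw [hdecomp, ← Matrix.sub_mul, ← Matrix.mul_sub, frobNorm_unitary_mul_mul_conjTranspose hU]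
  have hdist : frobNorm (S - C) = frobNorm (T - D) := by
    rw [hdecomp, hS_eq, ← Matrix.sub_mul, ← Matrix.mul_sub,
      frobNorm_unitary_mul_mul_conjTranspose hU]
  rw [hdistP, hdist]
  refine ⟨hT.frobNorm_diagonal_max_zero_sub_le d, fun heq => ?_⟩
  by_contra hne
  exact (hT.frobNorm_diagonal_max_zero_sub_lt d fun h => hne (by rw [hS_eq, h])).ne heq

/-- Setting the negative eigenvalues of a Hermitian matrix to zero yields the unique
nearest positive semidefinite matrix in Frobenius norm. -/
theorem stmt_6 {n : Type*} [Fintype n] [DecidableEq n]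
    (C : Matrix n n ℂ) (hC : C.IsHermitian)
    (U : Matrix n n ℂ) (hU : U ∈ Matrix.unitaryGroup n ℂ) (d : n → ℝ)
    (hdecomp : C = U * Matrix.diagonal (fun i => (d i : ℂ)) * Uᴴ) :
    (U * Matrix.diagonal (fun i => ((max (d i) 0 : ℝ) : ℂ)) * Uᴴ).PosSemidef ∧
    ∀ S : Matrix n n ℂ, S.PosSemidef →
      frobNorm (U * Matrix.diagonal (fun i => ((max (d i) 0 : ℝ) : ℂ)) * Uᴴ - C)
        ≤ frobNorm (S - C) ∧
      (frobNorm (U * Matrix.diagonal (fun i => ((max (d i) 0 : ℝ) : ℂ)) * Uᴴ - C)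
          = frobNorm (S - C) →
        S = U * Matrix.diagonal (fun i => ((max (d i) 0 : ℝ) : ℂ)) * Uᴴ) :=
  stmt_6_general C U hU d hdecomp
end

section
/- Let κ and n be finite types and C : κ → Matrix n n ℂ a family of Hermitian matrices. Then the unique nearest positive semidefinite matrix (in Frobenius norm) to the block-diagonal matrix Matrix.blockDiagonal C equals Matrix.blockDiagonal (fun k => Π_{⪰0}(C k)), i.e. the positive semidefinite projection of a Hermitian block-diagonal matrix is computed blockwise. -/
/-!
Frobenius distance splits over the blocks: for any `S`, the diagonal blocks of `S - diag C`
contribute at most `‖S - diag C‖²`, and the `k`-th diagonal block of a PSD matrix is PSD, so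
each block term is at least `‖P k - C k‖²` by minimality of `P k`. Summing gives minimality of
`diag P`. Uniqueness: the PSD cone is convex and the Frobenius norm is Euclidean, hence strictly
convex, so the midpoint of two distinct nearest points would be strictly nearer.
-/

open Matrix
open scoped ComplexOrder

/-- `P` is a nearest positive semidefinite matrix to `C` in Frobenius norm. -/
noncomputable def IsNearestPSD {n : Type*} [Fintype n] [DecidableEq n]
    (C P : Matrix n n ℂ) : Prop :=
  P.PosSemidef ∧ ∀ S : Matrix n n ℂ, S.PosSemidef → frobNorm (P - C) ≤ frobNorm (S - C)

noncomputable def Matrix.flattenEuclidean (n : Type*) :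
    Matrix n n ℂ ≃ₗ[ℝ] EuclideanSpace ℂ (n × n) :=
  (LinearEquiv.curry ℝ ℂ n n).symm ≪≫ₗ (WithLp.linearEquiv 2 ℝ (n × n → ℂ)).symm

lemma Matrix.PosSemidef.blockDiag {κ n : Type*} {S : Matrix (n × κ) (n × κ) ℂ}
    (hS : S.PosSemidef) (k : κ) : (S.blockDiag k).PosSemidef :=
  hS.submatrix (fun i => (i, k))

section Frobenius

variable {n : Type*} [Fintype n]

lemma frobNorm_nonneg (M : Matrix n n ℂ) : 0 ≤ frobNorm M := Real.sqrt_nonneg _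

lemma frobNorm_sq (M : Matrix n n ℂ) : frobNorm M ^ 2 = ∑ x, ∑ y, ‖M x y‖ ^ 2 :=
  Real.sq_sqrt (by positivity)

lemma frobNorm_eq_norm_flattenEuclidean (M : Matrix n n ℂ) :
    frobNorm M = ‖flattenEuclidean n M‖ := by
  simp only [frobNorm, EuclideanSpace.norm_eq, Fintype.sum_prod_type]
  rfl

lemma frobNorm_midpoint_sub_lt {A B C : Matrix n n ℂ} (hne : A ≠ B)
    (h : frobNorm (A - C) = frobNorm (B - C)) :
    frobNorm ((1 / 2 : ℝ) • (A + B) - C) < frobNorm (A - C) := by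
  have hmid : (1 / 2 : ℝ) • (A + B) - C = (1 / 2 : ℝ) • ((A - C) + (B - C)) := by module
  simp only [hmid, frobNorm_eq_norm_flattenEuclidean, map_smul, map_add] at h ⊢
  exact (norm_midpoint_lt_iff h).2 fun h' => hne (by simpa using h')

lemma IsNearestPSD.unique [DecidableEq n] {C P Q : Matrix n n ℂ} (hP : IsNearestPSD C P)
    (hQ : IsNearestPSD C Q) : P = Q := by
  by_contra hne
  have hmid : ((1 / 2 : ℝ) • (P + Q)).PosSemidef := (hP.1.add hQ.1).smul (by norm_num)
  have heq : frobNorm (P - C) = frobNorm (Q - C) := le_antisymm (hP.2 Q hQ.1) (hQ.2 P hP.1)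
  exact (hP.2 _ hmid).not_gt (frobNorm_midpoint_sub_lt hne heq)

end Frobenius

section BlockDiagonal

variable {κ n : Type*} [Fintype κ] [Fintype n]

lemma sum_frobNorm_sq_blockDiag_le (T : Matrix (n × κ) (n × κ) ℂ) :
    ∑ k, frobNorm (T.blockDiag k) ^ 2 ≤ frobNorm T ^ 2 := by
  simp only [frobNorm_sq, blockDiag_apply, Fintype.sum_prod_type]
  rw [Finset.sum_comm (γ := n)]
  gcongr with k _ x _ y _
  exact Finset.single_le_sum (f := fun l => ‖T (x, k) (y, l)‖ ^ 2)
    (fun l _ => by positivity) (Finset.mem_univ k)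

variable [DecidableEq κ]

lemma frobNorm_sq_blockDiagonal (M : κ → Matrix n n ℂ) :
    frobNorm (blockDiagonal M) ^ 2 = ∑ k, frobNorm (M k) ^ 2 := by
  simp only [frobNorm_sq, blockDiagonal_apply, Fintype.sum_prod_type, apply_ite (‖·‖ ^ 2),
    norm_zero, ne_eq, OfNat.ofNat_ne_zero, not_false_eq_true, zero_pow, Finset.sum_ite_eq,
    Finset.mem_univ, if_true]
  exact Finset.sum_comm

lemma Matrix.PosSemidef.blockDiagonal {P : κ → Matrix n n ℂ} (hP : ∀ k, (P k).PosSemidef) :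
    (Matrix.blockDiagonal P).PosSemidef := by
  refine .of_dotProduct_mulVec_nonneg ?_ fun x => ?_
  · rw [IsHermitian, blockDiagonal_conjTranspose]
    exact congrArg _ (funext fun k => (hP k).1)
  · have hblocks : star x ⬝ᵥ Matrix.blockDiagonal P *ᵥ x
        = ∑ k, star (fun i => x (i, k)) ⬝ᵥ P k *ᵥ fun i => x (i, k) := by
      simp only [dotProduct, mulVec, Fintype.sum_prod_type, blockDiagonal_apply, ite_mul,
        zero_mul, Finset.sum_ite_eq, Finset.mem_univ, if_true, Pi.star_apply]
      exact Finset.sum_comm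
    rw [hblocks]
    exact Finset.sum_nonneg fun k _ => (hP k).dotProduct_mulVec_nonneg _

lemma IsNearestPSD.blockDiagonal [DecidableEq n] {C P : κ → Matrix n n ℂ}
    (hP : ∀ k, IsNearestPSD (C k) (P k)) :
    IsNearestPSD (Matrix.blockDiagonal C) (Matrix.blockDiagonal P) := by
  refine ⟨.blockDiagonal fun k => (hP k).1, fun S hS => ?_⟩
  rw [← sq_le_sq₀ (frobNorm_nonneg _) (frobNorm_nonneg _)]
  calc frobNorm (Matrix.blockDiagonal P - Matrix.blockDiagonal C) ^ 2
        = ∑ k, frobNorm (P k - C k) ^ 2 := by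
        rw [← blockDiagonal_sub, frobNorm_sq_blockDiagonal]
        rfl
    _ ≤ ∑ k, frobNorm ((S - Matrix.blockDiagonal C).blockDiag k) ^ 2 := by
        refine Finset.sum_le_sum fun k _ => ?_
        rw [blockDiag_sub, blockDiag_blockDiagonal]
        exact pow_le_pow_left₀ (frobNorm_nonneg _) ((hP k).2 _ (hS.blockDiag k)) 2
    _ ≤ frobNorm (S - Matrix.blockDiagonal C) ^ 2 := sum_frobNorm_sq_blockDiag_le _

end BlockDiagonal

theorem stmt_8_general {κ n : Type*} [Fintype κ] [DecidableEq κ] [Fintype n] [DecidableEq n]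
    (C P : κ → Matrix n n ℂ)
    (hP : ∀ k, IsNearestPSD (C k) (P k)) :
    IsNearestPSD (Matrix.blockDiagonal C) (Matrix.blockDiagonal P) ∧
    ∀ Q : Matrix (n × κ) (n × κ) ℂ,
      IsNearestPSD (Matrix.blockDiagonal C) Q → Q = Matrix.blockDiagonal P :=
  ⟨.blockDiagonal hP, fun _ hQ => hQ.unique (.blockDiagonal hP)⟩

/-- The positive semidefinite projection of a Hermitian block-diagonal matrix is
computed blockwise: if each `P k` is the nearest PSD matrix to `C k`, then the
block-diagonal matrix of the `P k` is the unique nearest PSD matrix to the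
block-diagonal matrix of the `C k`. -/
theorem stmt_8 {κ n : Type*} [Fintype κ] [DecidableEq κ] [Fintype n] [DecidableEq n]
    (C P : κ → Matrix n n ℂ) (hC : ∀ k, (C k).IsHermitian)
    (hP : ∀ k, IsNearestPSD (C k) (P k)) :
    IsNearestPSD (Matrix.blockDiagonal C) (Matrix.blockDiagonal P) ∧
    ∀ Q : Matrix (n × κ) (n × κ) ℂ,
      IsNearestPSD (Matrix.blockDiagonal C) Q → Q = Matrix.blockDiagonal P :=
  stmt_8_general C P hP
end

section
/- Let M ≥ 1, n ≥ 1, C : ZMod M → Matrix (Fin n) (Fin n) ℂ with (C (−j))ᴴ = C j for all j (so that the associated block-circulant matrix X, X (i,a) (j,b) = (C (j − i)) a b, is Hermitian). Then the unique nearest positive semidefinite matrix P to X in Frobenius norm is itself block-circulant: there exists C' : ZMod M → Matrix (Fin n) (Fin n) ℂ with P (i,a) (j,b) = (C' (j − i)) a b for all i, j, a, b. -/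
/-!
Conjugation by a block translation `(i, a) ↦ (i + k, a)` is an isometry for the Frobenius norm,
preserves positive semidefiniteness and fixes the block-circulant matrix `X`; hence it maps the
nearest positive semidefinite matrix `P` to `X` to another nearest one. The positive semidefinite
matrices form a convex set and the Frobenius norm is strictly convex, so the nearest point is
unique, and `P` is invariant under all block translations, i.e. block-circulant.
-/

open Matrix
open scoped ComplexOrder

theorem Convex.eq_of_forall_norm_sub_le {E : Type*} [NormedAddCommGroup E] [NormedSpace ℝ E]
    [StrictConvexSpace ℝ E] {K : Set E} (hK : Convex ℝ K) {x p q : E} (hp : p ∈ K) (hq : q ∈ K)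
    (hp_min : ∀ s ∈ K, ‖p - x‖ ≤ ‖s - x‖) (hq_min : ∀ s ∈ K, ‖q - x‖ ≤ ‖s - x‖) : p = q := by
  by_contra hpq
  have hnorm : ‖p - x‖ = ‖q - x‖ := le_antisymm (hp_min q hq) (hq_min p hp)
  have hmid : (1 / 2 : ℝ) • p + (1 / 2 : ℝ) • q ∈ K :=
    hK hp hq (by norm_num) (by norm_num) (by norm_num)
  have hmid_sub : (1 / 2 : ℝ) • (p - x + (q - x)) = (1 / 2 : ℝ) • p + (1 / 2 : ℝ) • q - x := by
    module
  have hlt := (norm_midpoint_lt_iff hnorm).2 fun h => hpq (sub_left_injective h)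
  exact (hp_min _ hmid).not_gt (hmid_sub ▸ hlt)

namespace Matrix

theorem convex_setOf_posSemidef {ι 𝕜 : Type*} [Fintype ι] [RCLike 𝕜] :
    Convex ℝ {S : Matrix ι ι 𝕜 | S.PosSemidef} :=
  fun _ hA _ hB _ _ ha hb _ => (hA.smul ha).add (hB.smul hb)

variable {ι κ : Type*}

def toEuclideanSpace : Matrix ι ι ℂ →ₗ[ℝ] EuclideanSpace ℂ (ι × ι) where
  toFun A := WithLp.toLp 2 (Function.uncurry A)
  map_add' _ _ := rfl
  map_smul' _ _ := rfl

theorem toEuclideanSpace_injective : Function.Injective (toEuclideanSpace (ι := ι)) :=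
  fun _ _ h => funext₂ fun i j => congrArg (· (i, j)) h

variable [Fintype ι] [Fintype κ]

theorem frobNorm_eq_norm_toEuclideanSpace (A : Matrix ι ι ℂ) :
    frobNorm A = ‖toEuclideanSpace A‖ := by
  rw [EuclideanSpace.norm_eq, frobNorm, Fintype.sum_prod_type]
  rfl

theorem frobNorm_submatrix_equiv (A : Matrix ι ι ℂ) (e : κ ≃ ι) :
    frobNorm (A.submatrix e e) = frobNorm A := by
  unfold frobNorm
  congr 1
  exact Fintype.sum_equiv e _ _ fun i => Fintype.sum_equiv e _ _ fun j => rfl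

end Matrix

namespace IsNearestPSD

variable {ι κ : Type*} [Fintype ι] [DecidableEq ι] [Fintype κ] [DecidableEq κ]

theorem unique_s11 {X P Q : Matrix ι ι ℂ} (hP : IsNearestPSD X P) (hQ : IsNearestPSD X Q) :
    P = Q := by
  -- the real inner product `re ⟪·, ·⟫` makes `EuclideanSpace ℂ _` a strictly convex real space
  let _ : InnerProductSpace ℝ (EuclideanSpace ℂ (ι × ι)) := InnerProductSpace.complexToReal
  have hK := convex_setOf_posSemidef.linear_image (toEuclideanSpace (ι := ι))
  have hmin : ∀ R, IsNearestPSD X R → ∀ s ∈ toEuclideanSpace '' {S | S.PosSemidef},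
      ‖toEuclideanSpace R - toEuclideanSpace X‖ ≤ ‖s - toEuclideanSpace X‖ := by
    rintro R hR _ ⟨S, hS, rfl⟩
    simpa only [← map_sub, ← frobNorm_eq_norm_toEuclideanSpace] using hR.2 S hS
  exact toEuclideanSpace_injective <| hK.eq_of_forall_norm_sub_le
    ⟨P, hP.1, rfl⟩ ⟨Q, hQ.1, rfl⟩ (hmin P hP) (hmin Q hQ)

theorem submatrix_equiv {X P : Matrix ι ι ℂ} (hP : IsNearestPSD X P) (e : κ ≃ ι) :
    IsNearestPSD (X.submatrix e e) (P.submatrix e e) := by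
  refine ⟨hP.1.submatrix e, fun S hS => ?_⟩
  calc frobNorm (P.submatrix e e - X.submatrix e e) = frobNorm (P - X) :=
        frobNorm_submatrix_equiv (P - X) e
    _ ≤ frobNorm (S.submatrix e.symm e.symm - X) := hP.2 _ (hS.submatrix e.symm)
    _ = frobNorm (S - X.submatrix e e) := by
        rw [← frobNorm_submatrix_equiv _ e]
        congr 1
        ext
        simp

theorem submatrix_eq_self {X P : Matrix ι ι ℂ} (hP : IsNearestPSD X P) {e : ι ≃ ι}
    (hX : X.submatrix e e = X) : P.submatrix e e = P :=
  unique_s11 (hX ▸ hP.submatrix_equiv e) hP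

end IsNearestPSD

section BlockTranslation

variable {G m α : Type*} [AddGroup G]

def blockTranslate (m : Type*) (k : G) : G × m ≃ G × m :=
  (Equiv.addRight k).prodCongr (Equiv.refl m)

def Matrix.blockCirculant (C : G → Matrix m m α) : Matrix (G × m) (G × m) α :=
  of fun p q => C (q.1 - p.1) p.2 q.2

theorem Matrix.submatrix_blockTranslate_blockCirculant (C : G → Matrix m m α) (k : G) :
    (blockCirculant C).submatrix (blockTranslate m k) (blockTranslate m k) = blockCirculant C := by
  ext p q
  simp [blockCirculant, blockTranslate, add_sub_add_right_eq_sub]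

theorem Matrix.exists_blockCirculant_of_submatrix_blockTranslate {A : Matrix (G × m) (G × m) α}
    (hA : ∀ k, A.submatrix (blockTranslate m k) (blockTranslate m k) = A) :
    ∃ C : G → Matrix m m α, ∀ i j a b, A (i, a) (j, b) = C (j - i) a b := by
  refine ⟨fun j => of fun a b => A (0, a) (j, b), fun i j a b => ?_⟩
  simpa [blockTranslate] using congrFun₂ (hA i) (0, a) (j - i, b)

end BlockTranslation

theorem stmt_11_general (M n : ℕ) [NeZero M]
    (C : ZMod M → Matrix (Fin n) (Fin n) ℂ) :
    ∀ P : Matrix (ZMod M × Fin n) (ZMod M × Fin n) ℂ,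
      IsNearestPSD (Matrix.of fun p q : ZMod M × Fin n => C (q.1 - p.1) p.2 q.2) P →
      ∃ C' : ZMod M → Matrix (Fin n) (Fin n) ℂ,
        ∀ (i j : ZMod M) (a b : Fin n), P (i, a) (j, b) = C' (j - i) a b := fun _ hP =>
  exists_blockCirculant_of_submatrix_blockTranslate fun k =>
    hP.submatrix_eq_self (submatrix_blockTranslate_blockCirculant C k)

/-- The nearest positive semidefinite matrix to a Hermitian block-circulant matrix is
itself block-circulant. -/
theorem stmt_11 (M n : ℕ) [NeZero M] (hn : 1 ≤ n)
    (C : ZMod M → Matrix (Fin n) (Fin n) ℂ) (hC : ∀ j, (C (-j))ᴴ = C j) :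
    ∀ P : Matrix (ZMod M × Fin n) (ZMod M × Fin n) ℂ,
      IsNearestPSD (Matrix.of fun p q : ZMod M × Fin n => C (q.1 - p.1) p.2 q.2) P →
      ∃ C' : ZMod M → Matrix (Fin n) (Fin n) ℂ,
        ∀ (i j : ZMod M) (a b : Fin n), P (i, a) (j, b) = C' (j - i) a b :=
  stmt_11_general M n C
end

section
/- Fix M ≥ 2, m ≥ 1, n ≥ 1. For i : Fin M let Hᵢ : Matrix (Fin m) (Fin m) ℝ, and for i < j let Hᵢⱼ : Matrix (Fin m × Fin m) (Fin m × Fin m) ℝ; let O i α : Matrix (Fin m) (Fin m) ℝ for α : Fin n. Let ρᵢ : Matrix (Fin m) (Fin m) ℝ be symmetric for each i, and for i < j let ρᵢⱼ : Matrix (Fin m × Fin m) (Fin m × Fin m) ℝ be symmetric; for i > j set ρᵢⱼ ((a,b),(a',b')) := ρⱼᵢ ((b,a),(b',a')). Define G : Matrix (Fin M × Fin n) (Fin M × Fin n) ℝ by G (i,α) (j,β) = trace ((O i α)ᵀ * (O i β) * ρᵢ) if i = j and G (i,α) (j,β) = trace (((O i α)ᵀ ⊗ₖ (O j β)) * ρᵢⱼ)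 if i ≠ j. Let X : Matrix (Fin M × Fin n) (Fin M × Fin n) ℝ be symmetric with blocks Xᵢⱼ (α,β) = X (i,α) (j,β), and define the effective Hamiltonians Hᵢ[Xᵢᵢ] = Hᵢ − ∑_{α,β} Xᵢᵢ(α,β) • (O i α)ᵀ * (O i β) and, for i < j, Hᵢⱼ[Xᵢⱼ] = Hᵢⱼ − ∑_{α,β} Xᵢⱼ(α,β) • ((O i α)ᵀ ⊗ₖ (O j β) + ((O i α)ᵀ ⊗ₖ (O j β))ᵀ). Then ∑ᵢ trace (Hᵢ[Xᵢᵢ] * ρᵢ) + ∑_{i<j} trace (Hᵢⱼ[Xᵢⱼ] * ρᵢⱼ) = ∑ᵢ trace (Hᵢ * ρᵢ) + ∑_{i<j} trace (Hᵢⱼ * ρᵢⱼ) − trace (X * G); consequently, if X and G are both positive semidefinite, then ∑ᵢ trace (Hᵢ[Xᵢᵢ] * ρᵢ) + ∑_{i<j} trace (Hᵢⱼ[Xᵢⱼ] * ρᵢⱼ) ≤ ∑ᵢ trace (Hᵢ * ρᵢ) + ∑_{i<j} trace (Hᵢⱼ * ρᵢⱼ). -/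
/-!
Since `X` is symmetric, `Tr (X G) = ∑ᵢ ∑ⱼ ∑_{α,β} X (i,α) (j,β) G (i,α) (j,β)`. Each effective
Hamiltonian is affine in `X`, so its energy differs from the bare one by the block `(i,i)` of this
sum, respectively by the two blocks `(i,j)` and `(j,i)` together; the block `(j,i)` accounts for
the transposed Kronecker term thanks to the swap symmetry `ρⱼᵢ = ρᵢⱼ ∘ swap`. Weak duality is then
`Tr (X G) ≥ 0`, which holds for `X = Cᴴ C` because `Tr (Cᴴ C G) = Tr (C G Cᴴ)`.
-/

open Matrix Kronecker

namespace Fintype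

variable {ι R : Type*} [Fintype ι] [LinearOrder ι]

theorem sum_sum_eq_sum_diag_add_sum_lt [AddCommMonoid R] (f : ι → ι → R) :
    ∑ i, ∑ j, f i j = ∑ i, f i i + ∑ i, ∑ j, if i < j then f i j + f j i else 0 := by
  have trichotomy : ∀ i j, f i j = ((if i = j then f i j else 0) + (if i < j then f i j else 0))
      + if j < i then f i j else 0 := by
    intro i j
    rcases lt_trichotomy i j with h | rfl | h
    · simp [h, h.ne, h.not_gt]
    · simp
    · simp [h, h.ne', h.not_gt]
  simp only [ite_add_zero, Finset.sum_add_distrib]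
  rw [Finset.sum_comm (f := fun i j => if i < j then f j i else 0), ← add_assoc]
  simp_rw [← Finset.sum_add_distrib]
  refine Finset.sum_congr rfl fun i _ => ?_
  rw [← Fintype.sum_ite_eq i (f i)]
  simp only [← Finset.sum_add_distrib]
  exact Finset.sum_congr rfl fun j _ => trichotomy i j

theorem sum_diag_add_sum_lt_eq_sub_sum_sum [AddCommGroup R] {a a' : ι → R} {b b' : ι → ι → R}
    (f : ι → ι → R) (ha : ∀ i, a' i = a i - f i i)
    (hb : ∀ i j, i < j → b' i j = b i j - (f i j + f j i)) :
    ∑ i, a' i + ∑ i, ∑ j, (if i < j then b' i j else 0)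
      = ∑ i, a i + ∑ i, ∑ j, (if i < j then b i j else 0) - ∑ i, ∑ j, f i j := by
  have hb_sum : ∑ i, ∑ j, (if i < j then b' i j else 0)
      = ∑ i, ∑ j, (if i < j then b i j else 0) - ∑ i, ∑ j, if i < j then f i j + f j i else 0 := by
    simp only [← Finset.sum_sub_distrib]
    refine Finset.sum_congr rfl fun i _ => Finset.sum_congr rfl fun j _ => ?_
    split_ifs with hij
    · exact hb i j hij
    · exact (sub_zero 0).symm
  rw [hb_sum, sum_sum_eq_sum_diag_add_sum_lt f, Finset.sum_congr rfl fun i _ => ha i,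
    Finset.sum_sub_distrib]
  abel

end Fintype

namespace Matrix

open scoped ComplexOrder in
theorem PosSemidef.trace_mul_nonneg {𝕜 n : Type*} [RCLike 𝕜] [Fintype n] {A B : Matrix n n 𝕜}
    (hA : A.PosSemidef) (hB : B.PosSemidef) : 0 ≤ (A * B).trace := by
  classical
  open scoped MatrixOrder in
  obtain ⟨C, rfl⟩ := CStarAlgebra.nonneg_iff_eq_star_mul_self.mp hA.nonneg
  rw [Matrix.mul_assoc, trace_mul_comm, star_eq_conjTranspose]
  exact (hB.mul_mul_conjTranspose_same C).trace_nonneg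

theorem IsSymm.trace_mul_eq_sum_blocks {R ι κ : Type*} [AddCommMonoid R] [Mul R] [Fintype ι]
    [Fintype κ] {X : Matrix (ι × κ) (ι × κ) R} (hX : X.IsSymm) (G : Matrix (ι × κ) (ι × κ) R) :
    (X * G).trace = ∑ i, ∑ j, ∑ α, ∑ β, X (i, α) (j, β) * G (i, α) (j, β) := by
  nth_rewrite 1 [← hX.eq]
  simp only [trace, diag_apply, mul_apply, transpose_apply]
  rw [Finset.sum_comm]
  simp only [Fintype.sum_prod_type]
  exact Finset.sum_congr rfl fun _ _ => Finset.sum_comm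

theorem trace_kronecker_mul_submatrix_swap {R l m : Type*} [CommSemiring R] [Fintype l]
    [Fintype m] (A : Matrix l l R) (B : Matrix m m R) (ρ : Matrix (m × l) (m × l) R) :
    ((A ⊗ₖ B) * ρ.submatrix Prod.swap Prod.swap).trace = ((B ⊗ₖ A) * ρ).trace := by
  have hAB : A ⊗ₖ B = (B ⊗ₖ A).submatrix Prod.swap (Equiv.prodComm l m) := by
    ext ⟨a, b⟩ ⟨a', b'⟩
    simp [mul_comm]
  rw [hAB, ← Equiv.coe_prodComm, submatrix_mul_equiv, trace, trace]
  exact (Equiv.prodComm l m).sum_comp fun p => ((B ⊗ₖ A) * ρ) p p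

theorem trace_sub_sum_smul_mul {R n α β : Type*} [CommRing R] [Fintype n] [Fintype α]
    [Fintype β] (H ρ : Matrix n n R) (c : α → β → R) (A : α → β → Matrix n n R) :
    ((H - ∑ a, ∑ b, c a b • A a b) * ρ).trace =
      (H * ρ).trace - ∑ a, ∑ b, c a b * (A a b * ρ).trace := by
  simp [sub_mul, Finset.sum_mul, trace_sum, trace_sub]

end Matrix

theorem stmt_18_general (M m n : ℕ)
    (H1 : Fin M → Matrix (Fin m) (Fin m) ℝ)
    (H2 : Fin M → Fin M → Matrix (Fin m × Fin m) (Fin m × Fin m) ℝ)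
    (O : Fin M → Fin n → Matrix (Fin m) (Fin m) ℝ)
    (ρ1 : Fin M → Matrix (Fin m) (Fin m) ℝ)
    (ρ2 : Fin M → Fin M → Matrix (Fin m × Fin m) (Fin m × Fin m) ℝ)
    (hρ2swap : ∀ i j : Fin M, j < i →
      ∀ (a b a' b' : Fin m), ρ2 i j (a, b) (a', b') = ρ2 j i (b, a) (b', a'))
    (X : Matrix (Fin M × Fin n) (Fin M × Fin n) ℝ) (hX : X.IsSymm)
    (G : Matrix (Fin M × Fin n) (Fin M × Fin n) ℝ)
    (hG : ∀ (i j : Fin M) (α β : Fin n),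
      G (i, α) (j, β) =
        if i = j then ((O i α)ᵀ * O i β * ρ1 i).trace
        else (((O i α)ᵀ ⊗ₖ O j β) * ρ2 i j).trace)
    (Heff1 : Fin M → Matrix (Fin m) (Fin m) ℝ)
    (hHeff1 : ∀ i, Heff1 i =
      H1 i - ∑ α : Fin n, ∑ β : Fin n, X (i, α) (i, β) • ((O i α)ᵀ * O i β))
    (Heff2 : Fin M → Fin M → Matrix (Fin m × Fin m) (Fin m × Fin m) ℝ)
    (hHeff2 : ∀ i j : Fin M, i < j → Heff2 i j =
      H2 i j - ∑ α : Fin n, ∑ β : Fin n, X (i, α) (j, β) •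
        (((O i α)ᵀ ⊗ₖ O j β) + ((O i α)ᵀ ⊗ₖ O j β)ᵀ)) :
    ((∑ i, (Heff1 i * ρ1 i).trace)
        + (∑ i, ∑ j, if i < j then (Heff2 i j * ρ2 i j).trace else 0)
      = (∑ i, (H1 i * ρ1 i).trace)
        + (∑ i, ∑ j, if i < j then (H2 i j * ρ2 i j).trace else 0)
        - (X * G).trace) ∧
    (X.PosSemidef → G.PosSemidef →
      (∑ i, (Heff1 i * ρ1 i).trace)
          + (∑ i, ∑ j, if i < j then (Heff2 i j * ρ2 i j).trace else 0)
        ≤ (∑ i, (H1 i * ρ1 i).trace)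
          + (∑ i, ∑ j, if i < j then (H2 i j * ρ2 i j).trace else 0)) := by
  set F : Fin M → Fin M → ℝ := fun i j => ∑ α, ∑ β, X (i, α) (j, β) * G (i, α) (j, β) with hF
  have diag : ∀ i, (Heff1 i * ρ1 i).trace = (H1 i * ρ1 i).trace - F i i := by
    intro i
    simp [hHeff1, trace_sub_sum_smul_mul, hF, hG]
  have offDiag : ∀ i j, i < j →
      (Heff2 i j * ρ2 i j).trace = (H2 i j * ρ2 i j).trace - (F i j + F j i) := by
    intro i j hij
    have hρ : ρ2 i j = (ρ2 j i).submatrix Prod.swap Prod.swap := by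
      ext ⟨a, b⟩ ⟨a', b'⟩
      exact (hρ2swap j i hij b a b' a').symm
    rw [hHeff2 i j hij, trace_sub_sum_smul_mul]
    simp only [add_mul, trace_add, mul_add, Finset.sum_add_distrib]
    congr 2
    · simp [hF, hG, hij.ne]
    · rw [hF, Finset.sum_comm]
      refine Finset.sum_congr rfl fun α _ => Finset.sum_congr rfl fun β _ => ?_
      rw [hX.apply, hG, if_neg hij.ne', ← kroneckerMap_transpose, transpose_transpose, hρ,
        trace_kronecker_mul_submatrix_swap]
  have energy := Fintype.sum_diag_add_sum_lt_eq_sub_sum_sum F diag offDiag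
  rw [← show (X * G).trace = ∑ i, ∑ j, F i j from hX.trace_mul_eq_sum_blocks G] at energy
  exact ⟨energy, fun hXpsd hGpsd => energy ▸ sub_le_self _ (hXpsd.trace_mul_nonneg hGpsd)⟩

/-- Partial dualization of the global semidefinite constraint: replacing the local
Hamiltonian terms by the effective Hamiltonians determined by a symmetric dual
variable `X` changes the energy objective by exactly `−Tr(X G)`; consequently, if
`X` and `G` are positive semidefinite, the effective objective is a lower bound. -/
theorem stmt_18 (M m n : ℕ) (hM : 2 ≤ M) (hm : 1 ≤ m) (hn : 1 ≤ n)
    (H1 : Fin M → Matrix (Fin m) (Fin m) ℝ)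
    (H2 : Fin M → Fin M → Matrix (Fin m × Fin m) (Fin m × Fin m) ℝ)
    (O : Fin M → Fin n → Matrix (Fin m) (Fin m) ℝ)
    (ρ1 : Fin M → Matrix (Fin m) (Fin m) ℝ)
    (ρ2 : Fin M → Fin M → Matrix (Fin m × Fin m) (Fin m × Fin m) ℝ)
    (hρ1 : ∀ i, (ρ1 i).IsSymm)
    (hρ2 : ∀ i j, i < j → (ρ2 i j).IsSymm)
    (hρ2swap : ∀ i j : Fin M, j < i →
      ∀ (a b a' b' : Fin m), ρ2 i j (a, b) (a', b') = ρ2 j i (b, a) (b', a'))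
    (X : Matrix (Fin M × Fin n) (Fin M × Fin n) ℝ) (hX : X.IsSymm)
    (G : Matrix (Fin M × Fin n) (Fin M × Fin n) ℝ)
    (hG : ∀ (i j : Fin M) (α β : Fin n),
      G (i, α) (j, β) =
        if i = j then ((O i α)ᵀ * O i β * ρ1 i).trace
        else (((O i α)ᵀ ⊗ₖ O j β) * ρ2 i j).trace)
    (Heff1 : Fin M → Matrix (Fin m) (Fin m) ℝ)
    (hHeff1 : ∀ i, Heff1 i =
      H1 i - ∑ α : Fin n, ∑ β : Fin n, X (i, α) (i, β) • ((O i α)ᵀ * O i β))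
    (Heff2 : Fin M → Fin M → Matrix (Fin m × Fin m) (Fin m × Fin m) ℝ)
    (hHeff2 : ∀ i j : Fin M, i < j → Heff2 i j =
      H2 i j - ∑ α : Fin n, ∑ β : Fin n, X (i, α) (j, β) •
        (((O i α)ᵀ ⊗ₖ O j β) + ((O i α)ᵀ ⊗ₖ O j β)ᵀ)) :
    ((∑ i, (Heff1 i * ρ1 i).trace)
        + (∑ i, ∑ j, if i < j then (Heff2 i j * ρ2 i j).trace else 0)
      = (∑ i, (H1 i * ρ1 i).trace)
        + (∑ i, ∑ j, if i < j then (H2 i j * ρ2 i j).trace else 0)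
        - (X * G).trace) ∧
    (X.PosSemidef → G.PosSemidef →
      (∑ i, (Heff1 i * ρ1 i).trace)
          + (∑ i, ∑ j, if i < j then (Heff2 i j * ρ2 i j).trace else 0)
        ≤ (∑ i, (H1 i * ρ1 i).trace)
          + (∑ i, ∑ j, if i < j then (H2 i j * ρ2 i j).trace else 0)) :=
  stmt_18_general M m n H1 H2 O ρ1 ρ2 hρ2swap X hX G hG Heff1 hHeff1 Heff2 hHeff2
end
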